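/- Let ω : ℝ → ℝ³ be continuously differentiable, set Ω(t) = [ω(t)]×, and let R : ℝ → SO(3) be differentiable with dR/dt = R(t)Ω(t). Define the 9×9 block matrix A(t) = [[0, I₃, 0], [0, 0, −R(t)], [0, 0, 0]] and the 9×3 block column γ₁(t) = (0; 0; −R(t)ᵀ), which equals 𝒪(t)⁻¹(0; 0; I₃) for the observability matrix 𝒪(t) = diag(I₃, I₃, −R(t)). Then the recursion γ₂ = Aγ₁ − (d/dt)γ₁, γ₃ = Aγ₂ − (d/dt)γ₂ yields γ₂(t) = (0; I₃; −Ω(t)R(t)ᵀ) and γ₃(t) = (I₃; R(t)Ω(t)R(t)ᵀ; −(Ω(t)² − Ω̇(t))R(t)ᵀ). Equivalently, the inverse of the canonical-form diffeomorphism is the block matrix Υ(t)⁻¹ = [γ₁, γ₂, γ₃] = [[0, 0, I₃], [0, I₃, RΩRᵀ], [−Rᵀ, −ΩRᵀ, −(Ω² − Ω̇)Rᵀ]]. -/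

import Mathlib

open Matrix Filter Real Topology

noncomputable section

/-- `M ⪯ 0`: a real matrix is negative semidefinite iff `-M` is positive semidefinite. -/
def Matrix.NegSemidef {n : Type*} [Fintype n] (M : Matrix n n ℝ) : Prop := (-M).PosSemidef

/-- `M ≺ 0`: a real matrix is negative definite iff `-M` is positive definite. -/
def Matrix.NegDef {n : Type*} [Fintype n] (M : Matrix n n ℝ) : Prop := (-M).PosDef

/-- ℝ³ with the Euclidean norm. -/
abbrev E3 := EuclideanSpace ℝ (Fin 3)

/-- 3×3 real matrices. -/
abbrev M3 := Matrix (Fin 3) (Fin 3) ℝ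

/-- Index type used for 9-dimensional block vectors/matrices with 3×3 blocks. -/
abbrev I9 := Fin 3 ⊕ (Fin 3 ⊕ Fin 3)

/-- `R ∈ SO(3)`, i.e. `RᵀR = I₃` and `det R = 1`. -/
def SO3 (R : M3) : Prop := Rᵀ * R = 1 ∧ R.det = 1

/-- The skew-symmetric matrix `[w]ₓ` with `[w]ₓ u = w × u`. -/
def skew (w : E3) : M3 :=
  !![0, -w 2, w 1; w 2, 0, -w 0; -w 1, w 0, 0]

/-- 9×9 block matrix built from nine 3×3 blocks. -/
def blk3 (a b c d e f g h i : M3) : Matrix I9 I9 ℝ :=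
  Matrix.of fun x y =>
    match x, y with
    | .inl x, .inl y => a x y
    | .inl x, .inr (.inl y) => b x y
    | .inl x, .inr (.inr y) => c x y
    | .inr (.inl x), .inl y => d x y
    | .inr (.inl x), .inr (.inl y) => e x y
    | .inr (.inl x), .inr (.inr y) => f x y
    | .inr (.inr x), .inl y => g x y
    | .inr (.inr x), .inr (.inl y) => h x y
    | .inr (.inr x), .inr (.inr y) => i x y

/-- 3×9 block row matrix built from three 3×3 blocks. -/
def rowblk (a b c : M3) : Matrix (Fin 3) I9 ℝ :=
  Matrix.of fun x y =>
    match y with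
    | .inl y => a x y
    | .inr (.inl y) => b x y
    | .inr (.inr y) => c x y

/-- 9×3 block column matrix built from three 3×3 blocks. -/
def colblk (a b c : M3) : Matrix I9 (Fin 3) ℝ :=
  Matrix.of fun x y =>
    match x with
    | .inl x => a x y
    | .inr (.inl x) => b x y
    | .inr (.inr x) => c x y

/-- 9×9 matrix assembled from three 9×3 block columns. -/
def cols3 (a b c : Matrix I9 (Fin 3) ℝ) : Matrix I9 I9 ℝ :=
  Matrix.of fun x y =>
    match y with
    | .inl y => a x y
    | .inr (.inl y) => b x y
    | .inr (.inr y) => c x y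

/-- 9×9 matrix assembled from three 3×9 block rows. -/
def rows3 (a b c : Matrix (Fin 3) I9 ℝ) : Matrix I9 I9 ℝ :=
  Matrix.of fun x y =>
    match x with
    | .inl x => a x y
    | .inr (.inl x) => b x y
    | .inr (.inr x) => c x y

/-! The recursion only differentiates block columns whose entries are built from `R`, `Rᵀ` and
`[ω]ₓ` by products, so it is computed block by block: `Ṙ = RΩ` gives `(Rᵀ)˙ = (RΩ)ᵀ = −ΩRᵀ`
by skew-symmetry of `Ω`, and the product rule then yields `(ΩRᵀ)˙ = Ω̇Rᵀ − Ω²Rᵀ`. -/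

section BlockAlgebra

lemma blk3_mul_colblk (a b c d e f g h i p q r : M3) :
    blk3 a b c d e f g h i * colblk p q r =
      colblk (a * p + b * q + c * r) (d * p + e * q + f * r) (g * p + h * q + i * r) := by
  ext x y
  rcases x with x | x | x <;>
    simp [blk3, colblk, Matrix.mul_apply, Fintype.sum_sum_type, add_assoc]

lemma blk3_mul_blk3 (a b c d e f g h i a' b' c' d' e' f' g' h' i' : M3) :
    blk3 a b c d e f g h i * blk3 a' b' c' d' e' f' g' h' i' =
      blk3 (a * a' + b * d' + c * g') (a * b' + b * e' + c * h') (a * c' + b * f' + c * i')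
           (d * a' + e * d' + f * g') (d * b' + e * e' + f * h') (d * c' + e * f' + f * i')
           (g * a' + h * d' + i * g') (g * b' + h * e' + i * h') (g * c' + h * f' + i * i') := by
  ext x y
  rcases x with x | x | x <;> rcases y with y | y | y <;>
    simp [blk3, Matrix.mul_apply, Fintype.sum_sum_type, add_assoc]

lemma blk3_one : blk3 1 0 0 0 1 0 0 0 1 = (1 : Matrix I9 I9 ℝ) := by
  ext x y
  rcases x with x | x | x <;> rcases y with y | y | y <;> simp [blk3, Matrix.one_apply]

lemma cols3_colblk (a b c d e f g h i : M3) :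
    cols3 (colblk a b c) (colblk d e f) (colblk g h i) = blk3 a d g b e h c f i := by
  ext x y
  rcases x with x | x | x <;> rcases y with y | y | y <;> rfl

lemma colblk_sub (a b c d e f : M3) :
    colblk a b c - colblk d e f = colblk (a - d) (b - e) (c - f) := by
  ext x y
  rcases x with x | x | x <;> rfl

lemma inv_blk3_diag {M N : M3} (h : N * M = 1) :
    (blk3 1 0 0 0 1 0 0 0 M)⁻¹ = blk3 1 0 0 0 1 0 0 0 N := by
  refine Matrix.inv_eq_left_inv ?_
  rw [blk3_mul_blk3, ← blk3_one]
  simp [h]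

end BlockAlgebra

lemma skew_transpose (w : E3) : (skew w)ᵀ = -skew w := by
  ext i j
  fin_cases i <;> fin_cases j <;> simp [skew]

section EntrywiseDeriv

variable {m n p : Type*}

def HasEntrywiseDerivAt (F : ℝ → Matrix m n ℝ) (F' : Matrix m n ℝ) (t : ℝ) : Prop :=
  ∀ i j, HasDerivAt (fun τ => F τ i j) (F' i j) t

namespace HasEntrywiseDerivAt

variable {F : ℝ → Matrix m n ℝ} {F' : Matrix m n ℝ} {t : ℝ}

lemma matrix_of_deriv (h : HasEntrywiseDerivAt F F' t) :
    (Matrix.of fun i j => deriv (fun τ => F τ i j) t) = F' := by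
  ext i j
  exact (h i j).deriv

lemma const (M : Matrix m n ℝ) (t : ℝ) : HasEntrywiseDerivAt (fun _ => M) 0 t :=
  fun i j => hasDerivAt_const t (M i j)

lemma neg (h : HasEntrywiseDerivAt F F' t) : HasEntrywiseDerivAt (fun τ => -F τ) (-F') t :=
  fun i j => (h i j).neg

lemma transpose (h : HasEntrywiseDerivAt F F' t) :
    HasEntrywiseDerivAt (fun τ => (F τ)ᵀ) F'ᵀ t :=
  fun i j => h j i

lemma mul [Fintype n] {G : ℝ → Matrix n p ℝ} {G' : Matrix n p ℝ}
    (hF : HasEntrywiseDerivAt F F' t) (hG : HasEntrywiseDerivAt G G' t) :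
    HasEntrywiseDerivAt (fun τ => F τ * G τ) (F' * G t + F t * G') t := by
  intro i j
  simpa [Matrix.mul_apply, Finset.sum_add_distrib] using
    HasDerivAt.fun_sum fun k _ => (hF i k).mul (hG k j)

lemma colblk {a b c : ℝ → M3} {a' b' c' : M3} (ha : HasEntrywiseDerivAt a a' t)
    (hb : HasEntrywiseDerivAt b b' t) (hc : HasEntrywiseDerivAt c c' t) :
    HasEntrywiseDerivAt (fun τ => colblk (a τ) (b τ) (c τ)) (colblk a' b' c') t := by
  rintro (i | i | i) j
  exacts [ha i j, hb i j, hc i j]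

end HasEntrywiseDerivAt

end EntrywiseDeriv

lemma hasEntrywiseDerivAt_skew {ω ω' : ℝ → E3} {t : ℝ} (hω : HasDerivAt ω (ω' t) t) :
    HasEntrywiseDerivAt (fun τ => skew (ω τ)) (skew (ω' t)) t := by
  have hcoord (k : Fin 3) : HasDerivAt (fun τ => ω τ k) (ω' t k) t :=
    (EuclideanSpace.proj (𝕜 := ℝ) k).hasFDerivAt.comp_hasDerivAt t hω
  intro i j
  fin_cases i <;> fin_cases j <;> simp [skew]
  all_goals first
    | exact hasDerivAt_const _ _
    | exact hcoord _
    | exact (hcoord _).neg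

lemma translation_recursion_step {R : M3} {a b c : ℝ → M3} {a' b' c' : M3} {t : ℝ}
    (ha : HasEntrywiseDerivAt a a' t) (hb : HasEntrywiseDerivAt b b' t)
    (hc : HasEntrywiseDerivAt c c' t) :
    blk3 0 1 0 0 0 (-R) 0 0 0 * colblk (a t) (b t) (c t) -
        (Matrix.of fun i j => deriv (fun τ => colblk (a τ) (b τ) (c τ) i j) t) =
      colblk (b t - a') (-(R * c t) - b') (-c') := by
  rw [(ha.colblk hb hc).matrix_of_deriv, blk3_mul_colblk, colblk_sub]
  simp

theorem stmt_11_general (ω ω' : ℝ → E3) (hω : ∀ t, HasDerivAt ω (ω' t) t)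
    (R : ℝ → M3) (hSO : ∀ t, SO3 (R t))
    (hR : ∀ t i j, HasDerivAt (fun s => R s i j) ((R t * skew (ω t)) i j) t) :
    ∀ t : ℝ,
      let A : ℝ → Matrix I9 I9 ℝ := fun s => blk3 0 1 0 0 0 (-(R s)) 0 0 0
      let 𝒪 : ℝ → Matrix I9 I9 ℝ := fun s => blk3 1 0 0 0 1 0 0 0 (-(R s))
      let γ₁ : ℝ → Matrix I9 (Fin 3) ℝ := fun s => colblk 0 0 (-(R s)ᵀ)
      let γ₂ : ℝ → Matrix I9 (Fin 3) ℝ := fun s =>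
        A s * γ₁ s - Matrix.of fun i j => deriv (fun τ => γ₁ τ i j) s
      let γ₃ : ℝ → Matrix I9 (Fin 3) ℝ := fun s =>
        A s * γ₂ s - Matrix.of fun i j => deriv (fun τ => γ₂ τ i j) s
      γ₁ t = (𝒪 t)⁻¹ * colblk 0 0 1 ∧
      γ₂ t = colblk 0 1 (-(skew (ω t) * (R t)ᵀ)) ∧
      γ₃ t = colblk 1 (R t * skew (ω t) * (R t)ᵀ)
          (-((skew (ω t) * skew (ω t) - skew (ω' t)) * (R t)ᵀ)) ∧
      cols3 (γ₁ t) (γ₂ t) (γ₃ t) =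
        blk3 0 0 1
             0 1 (R t * skew (ω t) * (R t)ᵀ)
             (-(R t)ᵀ) (-(skew (ω t) * (R t)ᵀ))
             (-((skew (ω t) * skew (ω t) - skew (ω' t)) * (R t)ᵀ)) := by
  intro t A 𝒪 γ₁ γ₂ γ₃
  have hRT (s : ℝ) : HasEntrywiseDerivAt (fun τ => (R τ)ᵀ) (-(skew (ω s) * (R s)ᵀ)) s := by
    simpa [Matrix.transpose_mul, skew_transpose] using HasEntrywiseDerivAt.transpose (hR s)
  have hγ₂ (s : ℝ) : γ₂ s = colblk 0 1 (-(skew (ω s) * (R s)ᵀ)) := by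
    have := translation_recursion_step (R := R s) (a := fun _ => 0) (b := fun _ => 0)
      (.const 0 s) (.const 0 s) (hRT s).neg
    simp only [sub_zero, mul_neg, neg_neg, mul_eq_one_comm.mp (hSO s).1] at this
    exact this
  have hΩRT : HasEntrywiseDerivAt (fun τ => -(skew (ω τ) * (R τ)ᵀ))
      ((skew (ω t) * skew (ω t) - skew (ω' t)) * (R t)ᵀ) t := by
    convert ((hasEntrywiseDerivAt_skew (hω t)).mul (hRT t)).neg using 1
    noncomm_ring
  have hγ₃ : γ₃ t = colblk 1 (R t * skew (ω t) * (R t)ᵀ)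
      (-((skew (ω t) * skew (ω t) - skew (ω' t)) * (R t)ᵀ)) := by
    have := translation_recursion_step (R := R t) (a := fun _ => 0) (b := fun _ => 1)
      (.const 0 t) (.const 1 t) hΩRT
    simp only [sub_zero, mul_neg, neg_neg, ← Matrix.mul_assoc] at this
    show A t * γ₂ t - _ = _
    rwa [show γ₂ = _ from funext hγ₂]
  have hγ₁ : γ₁ t = (𝒪 t)⁻¹ * colblk 0 0 1 := by
    rw [inv_blk3_diag (N := -(R t)ᵀ) (by simpa using (hSO t).1), blk3_mul_colblk]
    simp [γ₁]
  refine ⟨hγ₁, hγ₂ t, hγ₃, ?_⟩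
  rw [hγ₂ t, hγ₃]
  exact cols3_colblk ..

/-- With `Ω = [ω]ₓ`, `Ṙ = RΩ`, `A(t) = [[0,I₃,0],[0,0,−R(t)],[0,0,0]]`
and `γ₁(t) = (0;0;−R(t)ᵀ) = 𝒪(t)⁻¹(0;0;I₃)` for `𝒪(t) = diag(I₃,I₃,−R(t))`, the recursion
`γ_{i+1} = Aγᵢ − γ̇ᵢ` yields `γ₂ = (0;I₃;−ΩRᵀ)` and `γ₃ = (I₃;RΩRᵀ;−(Ω²−Ω̇)Rᵀ)`;
equivalently `Υ(t)⁻¹ = [γ₁,γ₂,γ₃] = [[0,0,I₃],[0,I₃,RΩRᵀ],[−Rᵀ,−ΩRᵀ,−(Ω²−Ω̇)Rᵀ]]`. -/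
theorem stmt_11 (ω ω' : ℝ → E3) (hω : ∀ t, HasDerivAt ω (ω' t) t) (hω' : Continuous ω')
    (R : ℝ → M3) (hSO : ∀ t, SO3 (R t))
    (hR : ∀ t i j, HasDerivAt (fun s => R s i j) ((R t * skew (ω t)) i j) t) :
    ∀ t : ℝ,
      let A : ℝ → Matrix I9 I9 ℝ := fun s => blk3 0 1 0 0 0 (-(R s)) 0 0 0
      let 𝒪 : ℝ → Matrix I9 I9 ℝ := fun s => blk3 1 0 0 0 1 0 0 0 (-(R s))
      let γ₁ : ℝ → Matrix I9 (Fin 3) ℝ := fun s => colblk 0 0 (-(R s)ᵀ)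
      let γ₂ : ℝ → Matrix I9 (Fin 3) ℝ := fun s =>
        A s * γ₁ s - Matrix.of fun i j => deriv (fun τ => γ₁ τ i j) s
      let γ₃ : ℝ → Matrix I9 (Fin 3) ℝ := fun s =>
        A s * γ₂ s - Matrix.of fun i j => deriv (fun τ => γ₂ τ i j) s
      γ₁ t = (𝒪 t)⁻¹ * colblk 0 0 1 ∧
      γ₂ t = colblk 0 1 (-(skew (ω t) * (R t)ᵀ)) ∧
      γ₃ t = colblk 1 (R t * skew (ω t) * (R t)ᵀ)
          (-((skew (ω t) * skew (ω t) - skew (ω' t)) * (R t)ᵀ)) ∧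
      cols3 (γ₁ t) (γ₂ t) (γ₃ t) =
        blk3 0 0 1
             0 1 (R t * skew (ω t) * (R t)ᵀ)
             (-(R t)ᵀ) (-(skew (ω t) * (R t)ᵀ))
             (-((skew (ω t) * skew (ω t) - skew (ω' t)) * (R t)ᵀ)) :=
  stmt_11_general ω ω' hω R hSO hR
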